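/- arXiv:2411.17737 — 3 statements merged into one kernel-verified Lean document; each statement's English description precedes it below -/
import Mathlib

section
/- Let r ≥ 2 be an integer. Then the walk matrix W(M_1) of the matrix M_1 has rank r over ℝ (equivalently, W(M_1) is nonsingular). -/
open Matrix BigOperators

/-- The divisor-type matrix `M₁`: tridiagonal with diagonal `(1, 2, ..., 2, 3)`
and off-diagonal entries `1` (0-based indexing). -/
def M1 (r : ℕ) : Matrix (Fin r) (Fin r) ℤ :=
  Matrix.of fun i j =>
    if i = j then (if (i : ℕ) = 0 then 1 else if (i : ℕ) = r - 1 then 3 else 2)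
    else if (i : ℕ) + 1 = (j : ℕ) ∨ (j : ℕ) + 1 = (i : ℕ) then 1 else 0

/-- The walk matrix of a square matrix `M`: its `j`-th column is `M^j · e` (0-based `j`). -/
def walkMatrix {r : ℕ} (M : Matrix (Fin r) (Fin r) ℤ) : Matrix (Fin r) (Fin r) ℤ :=
  Matrix.of fun i j => (M ^ (j : ℕ)).mulVec (fun _ => 1) i

/- ### Auxiliary development -/

lemma sum_ite_coe {r : ℕ} {M : Type*} [AddCommMonoid M] (m : ℕ) (f : Fin r → M) :
    ∑ l : Fin r, (if (l : ℕ) = m then f l else 0) = if h : m < r then f ⟨m, h⟩ else 0 := by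
  by_cases h : m < r
  · rw [dif_pos h]
    have hc : ∀ l : Fin r, (if (l : ℕ) = m then f l else 0)
        = if l = (⟨m, h⟩ : Fin r) then f l else 0 := by
      intro l; congr 1
      simp [Fin.ext_iff]
    rw [Finset.sum_congr rfl (fun l _ => hc l), Finset.sum_ite_eq' Finset.univ]
    simp
  · rw [dif_neg h]
    apply Finset.sum_eq_zero
    intro l _
    rw [if_neg]
    have := l.isLt
    omega

lemma M1_apply (r : ℕ) (i j : Fin r) :
    M1 r i j = (if (j : ℕ) = (i : ℕ) then
        (if (i : ℕ) = 0 then 1 else if (i : ℕ) = r - 1 then 3 else 2) else 0)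
      + (if (j : ℕ) = (i : ℕ) + 1 then 1 else 0)
      + (if (j : ℕ) + 1 = (i : ℕ) then 1 else 0) := by
  simp only [M1, Matrix.of_apply, Fin.ext_iff]
  split_ifs <;> omega

lemma M1_mulVec (r : ℕ) (v : Fin r → ℤ) (i : Fin r) :
    (M1 r).mulVec v i = (if (i : ℕ) = 0 then 1 else if (i : ℕ) = r - 1 then 3 else 2) * v i
      + (if h : (i : ℕ) + 1 < r then v ⟨(i : ℕ) + 1, h⟩ else 0)
      + (if (i : ℕ) = 0 then 0 else v ⟨(i : ℕ) - 1, lt_of_le_of_lt (Nat.sub_le _ _) i.isLt⟩) := by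
  rw [Matrix.mulVec, dotProduct]
  have hc : ∀ l : Fin r, M1 r i l * v l
      = (if (l : ℕ) = (i : ℕ) then
          (if (i : ℕ) = 0 then 1 else if (i : ℕ) = r - 1 then 3 else 2) * v l else 0)
        + (if (l : ℕ) = (i : ℕ) + 1 then v l else 0)
        + (if (l : ℕ) + 1 = (i : ℕ) then v l else 0) := by
    intro l
    rw [M1_apply]
    split_ifs <;> ring
  rw [Finset.sum_congr rfl (fun l _ => hc l)]
  rw [Finset.sum_add_distrib, Finset.sum_add_distrib, sum_ite_coe, sum_ite_coe]
  congr 1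
  · congr 1
    rw [dif_pos i.isLt]
  · by_cases h0 : (i : ℕ) = 0
    · rw [if_pos h0]
      apply Finset.sum_eq_zero
      intro l _
      rw [if_neg (by omega)]
    · rw [if_neg h0]
      have hc2 : ∀ l : Fin r, (if (l : ℕ) + 1 = (i : ℕ) then v l else 0)
          = if (l : ℕ) = (i : ℕ) - 1 then v l else 0 := by
        intro l; congr 1
        exact propext ⟨fun h => by omega, fun h => by omega⟩
      rw [Finset.sum_congr rfl (fun l _ => hc2 l), sum_ite_coe,
        dif_pos (lt_of_le_of_lt (Nat.sub_le _ _) i.isLt)]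

lemma M1_mul_apply (r : ℕ) (A : Matrix (Fin r) (Fin r) ℤ) (i j : Fin r) :
    (M1 r * A) i j = (if (i : ℕ) = 0 then 1 else if (i : ℕ) = r - 1 then 3 else 2) * A i j
      + (if h : (i : ℕ) + 1 < r then A ⟨(i : ℕ) + 1, h⟩ j else 0)
      + (if (i : ℕ) = 0 then 0
          else A ⟨(i : ℕ) - 1, lt_of_le_of_lt (Nat.sub_le _ _) i.isLt⟩ j) := by
  have h : (M1 r * A) i j = (M1 r).mulVec (fun l => A l j) i := by
    rw [Matrix.mul_apply, Matrix.mulVec, dotProduct]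
  rw [h, M1_mulVec]

/-- Band structure: entries of `M1^k` vanish below the `k`-th subdiagonal. -/
lemma M1_pow_band_zero (r : ℕ) : ∀ (k : ℕ) (i j : Fin r), (j : ℕ) + k < (i : ℕ) →
    ((M1 r) ^ k) i j = 0 := by
  intro k
  induction k with
  | zero =>
    intro i j h
    rw [pow_zero]
    exact Matrix.one_apply_ne (Fin.ne_of_val_ne (by omega))
  | succ k ih =>
    intro i j h
    rw [pow_succ', M1_mul_apply, ih i j (by omega)]
    have h2 : (i : ℕ) ≠ 0 := by omega
    rw [if_neg h2, ih _ j (by simp; omega)]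
    have hd : (if h : (i : ℕ) + 1 < r then ((M1 r) ^ k) ⟨(i : ℕ) + 1, h⟩ j else 0) = 0 := by
      split_ifs with hh
      · exact ih _ _ (by simp; omega)
      · rfl
    rw [hd, if_neg h2]
    ring

/-- The `k`-th subdiagonal of `M1^k` consists of ones. -/
lemma M1_pow_band_one (r : ℕ) : ∀ (k : ℕ) (i j : Fin r), (i : ℕ) = (j : ℕ) + k →
    ((M1 r) ^ k) i j = 1 := by
  intro k
  induction k with
  | zero =>
    intro i j h
    have hij : i = j := Fin.ext (by omega)
    rw [hij, pow_zero, Matrix.one_apply_eq]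
  | succ k ih =>
    intro i j h
    rw [pow_succ', M1_mul_apply]
    have h2 : (i : ℕ) ≠ 0 := by omega
    rw [if_neg h2, M1_pow_band_zero r k i j (by omega),
      ih ⟨(i : ℕ) - 1, lt_of_le_of_lt (Nat.sub_le _ _) i.isLt⟩ j (by simp; omega)]
    have hd : (if h : (i : ℕ) + 1 < r then ((M1 r) ^ k) ⟨(i : ℕ) + 1, h⟩ j else 0) = 0 := by
      split_ifs with hh
      · exact M1_pow_band_zero r k _ _ (by simp; omega)
      · rfl
    rw [hd, if_neg h2]
    ring

/-- The vector `u` with `M1 ⬝ e = 2 • u`. -/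
def uvec (r : ℕ) : Fin r → ℤ := fun i => if (i : ℕ) = 0 then 1 else 2

lemma M1_mulVec_one (r : ℕ) (hr : 2 ≤ r) :
    (M1 r).mulVec (fun _ => 1) = fun i => 2 * uvec r i := by
  funext i
  rw [M1_mulVec]
  have hlt := i.isLt
  unfold uvec
  by_cases h0 : (i : ℕ) = 0
  · rw [if_pos h0, if_pos h0, if_pos h0, dif_pos (by omega)]
    ring
  · rw [if_neg h0, if_neg h0, if_neg h0]
    by_cases hl : (i : ℕ) = r - 1
    · rw [if_pos hl, dif_neg (by omega)]
      ring
    · rw [if_neg hl, dif_pos (by omega)]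
      ring

/-- The reduced walk matrix: column `0` is `e`, column `j ≥ 1` is `M1^(j-1) ⬝ u`. -/
def Wp (r : ℕ) : Matrix (Fin r) (Fin r) ℤ :=
  Matrix.of fun i j => if (j : ℕ) = 0 then 1 else (((M1 r) ^ ((j : ℕ) - 1)).mulVec (uvec r)) i

lemma walkMatrix_eq (r : ℕ) (hr : 2 ≤ r) :
    walkMatrix (M1 r) = Wp r * Matrix.diagonal (fun j : Fin r => if (j : ℕ) = 0 then 1 else 2) := by
  ext i j
  rw [Matrix.mul_diagonal]
  show ((M1 r) ^ (j : ℕ)).mulVec (fun _ => 1) i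
    = (if (j : ℕ) = 0 then 1 else (((M1 r) ^ ((j : ℕ) - 1)).mulVec (uvec r)) i)
      * (if (j : ℕ) = 0 then 1 else 2)
  by_cases hj : (j : ℕ) = 0
  · rw [if_pos hj, if_pos hj, hj, pow_zero, Matrix.one_mulVec]
    ring
  · rw [if_neg hj, if_neg hj]
    obtain ⟨k, hk⟩ : ∃ k, (j : ℕ) = k + 1 := ⟨(j : ℕ) - 1, by omega⟩
    rw [hk]
    simp only [Nat.add_sub_cancel]
    rw [pow_succ, ← Matrix.mulVec_mulVec, M1_mulVec_one r hr]
    have : (fun i => 2 * uvec r i) = (2 : ℤ) • uvec r := by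
      funext x; simp [smul_eq_mul]
    rw [this, Matrix.mulVec_smul]
    simp [smul_eq_mul]
    ring

/-- Mod 2, entries of `Wp` in column `j ≥ 1` reduce to `(M1^(j-1))_{i,0}`. -/
lemma Wp_map_apply (r : ℕ) (hr : 2 ≤ r) (i j : Fin r) (hj : (j : ℕ) ≠ 0) :
    ((Wp r) i j : ZMod 2) = (((M1 r) ^ ((j : ℕ) - 1)) i ⟨0, by omega⟩ : ℤ) := by
  have hW : (Wp r) i j = (((M1 r) ^ ((j : ℕ) - 1)).mulVec (uvec r)) i := by
    unfold Wp; rw [Matrix.of_apply, if_neg hj]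
  rw [hW, Matrix.mulVec, dotProduct, Int.cast_sum]
  have hc : ∀ l : Fin r, ((((M1 r) ^ ((j : ℕ) - 1)) i l * uvec r l : ℤ) : ZMod 2)
      = if (l : ℕ) = 0 then ((((M1 r) ^ ((j : ℕ) - 1)) i l : ℤ) : ZMod 2) else 0 := by
    intro l
    unfold uvec
    by_cases h0 : (l : ℕ) = 0
    · rw [if_pos h0, if_pos h0, mul_one]
    · rw [if_neg h0, if_neg h0, Int.cast_mul,
        show ((2 : ℤ) : ZMod 2) = 0 from by decide, mul_zero]
  rw [Finset.sum_congr rfl (fun l _ => hc l), sum_ite_coe, dif_pos (by omega : 0 < r)]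

/-- The walk matrix of `M₁` has full rank `r` over `ℝ`. -/
theorem rank_walkMatrix_M1 (r : ℕ) (hr : 2 ≤ r) :
    ((walkMatrix (M1 r)).map (Int.cast : ℤ → ℝ)).rank = r := by
  obtain ⟨n, rfl⟩ : ∃ n, r = n + 2 := ⟨r - 2, by omega⟩
  set r := n + 2 with hrdef
  -- Step 1: det Wp is odd.
  have hWp : (((Wp r).det : ℤ) : ZMod 2) ≠ 0 := by
    set B : Matrix (Fin r) (Fin r) (ZMod 2) := (Wp r).map (Int.cast : ℤ → ZMod 2) with hB
    have hdetB : B.det = (((Wp r).det : ℤ) : ZMod 2) :=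
      ((Int.castRingHom (ZMod 2)).map_det (Wp r)).symm
    set σ : Equiv.Perm (Fin r) := finRotate r with hσ
    have hσap : ∀ j : Fin r, ((σ j : Fin r) : ℕ)
        = if (j : ℕ) = n + 1 then 0 else (j : ℕ) + 1 := by
      intro j
      rw [hσ, finRotate_succ_apply, Fin.val_add_one]
      by_cases h : j = Fin.last (n + 1)
      · rw [if_pos h, if_pos (by rw [h]; rfl)]
      · rw [if_neg h, if_neg (by rw [Fin.ext_iff] at h; exact h)]
    have hCtri : (B.submatrix id σ).BlockTriangular id := by
      intro i j hij
      simp only [Matrix.submatrix_apply, id] at hij ⊢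
      have hij' : (j : ℕ) < (i : ℕ) := hij
      have hjn : (j : ℕ) ≠ n + 1 := by
        have := i.isLt
        omega
      have hval : ((σ j : Fin r) : ℕ) = (j : ℕ) + 1 := by rw [hσap j, if_neg hjn]
      rw [hB, Matrix.map_apply]
      rw [Wp_map_apply r (by omega) i (σ j) (by omega)]
      rw [M1_pow_band_zero r _ i _ (by simp [hval]; omega)]
      exact Int.cast_zero
    have hCdiag : ∀ i : Fin r, (B.submatrix id σ) i i = 1 := by
      intro i
      simp only [Matrix.submatrix_apply, id]
      rw [hB, Matrix.map_apply]
      by_cases hi : (i : ℕ) = n + 1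
      · have hval : ((σ i : Fin r) : ℕ) = 0 := by rw [hσap i, if_pos hi]
        have : (Wp r) i (σ i) = 1 := by
          unfold Wp; rw [Matrix.of_apply, if_pos hval]
        rw [this]; norm_num
      · have hval : ((σ i : Fin r) : ℕ) = (i : ℕ) + 1 := by rw [hσap i, if_neg hi]
        rw [Wp_map_apply r (by omega) i (σ i) (by omega)]
        rw [M1_pow_band_one r _ i _ (by simp [hval])]
        norm_num
    have hCdet : (B.submatrix id σ).det = 1 := by
      rw [Matrix.det_of_upperTriangular hCtri]
      exact Finset.prod_eq_one (fun i _ => hCdiag i)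
    have hperm : (B.submatrix id σ).det = (Equiv.Perm.sign σ : ZMod 2) * B.det :=
      Matrix.det_permute' σ B
    intro h0
    rw [hCdet, hdetB, h0, mul_zero] at hperm
    exact one_ne_zero hperm
  -- Step 2: det of walk matrix is nonzero over ℤ.
  have hdet : (walkMatrix (M1 r)).det ≠ 0 := by
    rw [walkMatrix_eq r (by omega), Matrix.det_mul, Matrix.det_diagonal]
    apply mul_ne_zero
    · intro h0
      rw [h0] at hWp
      exact hWp (by norm_num)
    · apply Finset.prod_ne_zero_iff.mpr
      intro j _
      split_ifs <;> norm_num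
  -- Step 3: conclude full rank over ℝ.
  have hdetR : ((walkMatrix (M1 r)).map (Int.cast : ℤ → ℝ)).det ≠ 0 := by
    rw [show ((walkMatrix (M1 r)).map (Int.cast : ℤ → ℝ)).det
      = ((Int.castRingHom ℝ).mapMatrix (walkMatrix (M1 r))).det from rfl, ← RingHom.map_det]
    intro h
    exact hdet (Int.cast_injective (α := ℝ) (by simpa using h))
  have hunit : IsUnit ((walkMatrix (M1 r)).map (Int.cast : ℤ → ℝ)) := by
    rw [Matrix.isUnit_iff_isUnit_det]
    exact isUnit_iff_ne_zero.mpr hdetR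
  rw [Matrix.rank_of_isUnit _ hunit, Fintype.card_fin]
end

section
/- Let r ≥ 2 be an integer. Then the product over k = 1,...,r of the sums of the entries of the vectors w_k satisfies ∏_{k=1}^{r} (e_r^T w_k) = (−1)^{⌊r/2⌋} · 2^{r−1}, where e_r^T w_k denotes the sum of the r entries of w_k. -/
/-! Multiplying `1 - 2 cos θ + 2 cos 2θ - ⋯ ± 2 cos nθ` by `cos (θ/2)` telescopes to
`±cos ((2n+1)θ/2)`. With `r = n + 1` and `θ = β_k`, this gives
`(e_rᵀ w_k) · cos ((k-1)π/(2r-1)) = ±1`. The product of these cosines is `2^(1-r)`: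
doubling the angles permutes the sines `sin (jπ/(2r-1))`, `1 ≤ j ≤ r-1`, because
`sin (π - x) = sin x`, and `sin 2x = 2 sin x cos x`. The signs multiply to
`(-1)^(r choose 2) = (-1)^⌊r/2⌋`. -/

open Matrix Real BigOperators

noncomputable section

/-- `β_k = (2k - 2)π / (2r - 1)`. -/
def betaA (r k : ℕ) : ℝ := (2 * (k : ℝ) - 2) * Real.pi / (2 * (r : ℝ) - 1)

/-- The vector `w_k` whose `j`-th entry (1-based `j ≤ r - 1`) is
`(-1)^(r-j) · 2 cos((r-j) β_k)` and whose last entry is `1`; here 0-based indexing. -/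
def wvec (r k : ℕ) : Fin r → ℝ :=
  fun j => if (j : ℕ) = r - 1 then 1
    else (-1 : ℝ) ^ (r - 1 - (j : ℕ)) * (2 * Real.cos (((r - 1 - (j : ℕ) : ℕ) : ℝ) * betaA r k))

open Finset

lemma prod_Icc_one_eq_prod_range {M : Type*} [CommMonoid M] (f : ℕ → M) (n : ℕ) :
    ∏ k ∈ Icc 1 n, f k = ∏ i ∈ range n, f (i + 1) := by
  rw [← Ico_add_one_right_eq_Icc, prod_Ico_eq_prod_range, Nat.add_sub_cancel]
  simp only [add_comm]

lemma cos_half_mul_one_add_sum_alternating_cos (θ : ℝ) (n : ℕ) :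
    cos (θ / 2) * (1 + ∑ m ∈ range n, (-1) ^ (m + 1) * (2 * cos ((m + 1 : ℕ) * θ)))
      = (-1) ^ n * cos ((2 * n + 1) * θ / 2) := by
  induction n with
  | zero => simp
  | succ n ih =>
    have h₁ := cos_add ((n + 1) * θ) (θ / 2)
    have h₂ := cos_sub ((n + 1) * θ) (θ / 2)
    rw [show (n + 1) * θ + θ / 2 = (2 * (n + 1 : ℕ) + 1) * θ / 2 by push_cast; ring] at h₁
    rw [show (n + 1) * θ - θ / 2 = (2 * n + 1) * θ / 2 by ring] at h₂
    rw [sum_range_succ]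
    push_cast at ih h₁ ⊢
    linear_combination ih - (-1 : ℝ) ^ (n + 1) * (h₁ + h₂)

lemma sum_wvec_succ (n k : ℕ) :
    ∑ j, wvec (n + 1) k j
      = 1 + ∑ m ∈ range n, (-1) ^ (m + 1) * (2 * cos ((m + 1 : ℕ) * betaA (n + 1) k)) := by
  have hlast : wvec (n + 1) k (Fin.last n) = 1 := by simp [wvec]
  have hcast (i : Fin n) : wvec (n + 1) k i.castSucc
      = (-1) ^ (n - i) * (2 * cos ((n - i : ℕ) * betaA (n + 1) k)) := by
    simp [wvec, i.isLt.ne]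
  rw [Fin.sum_univ_castSucc, hlast, add_comm, sum_congr rfl fun i _ => hcast i,
    Fin.sum_univ_eq_sum_range (fun j => (-1) ^ (n - j) * (2 * cos ((n - j : ℕ) * betaA (n + 1) k))),
    ← sum_range_reflect]
  refine congrArg _ (sum_congr rfl fun m hm => ?_)
  rw [show n - (n - 1 - m) = m + 1 by grind]

lemma betaA_succ_succ (n i : ℕ) : betaA (n + 1) (i + 1) = 2 * (i * π / (2 * n + 1)) := by
  rw [betaA]; push_cast; ring

lemma sum_wvec_mul_cos (n i : ℕ) :
    (∑ j, wvec (n + 1) (i + 1) j) * cos (i * π / (2 * n + 1)) = (-1) ^ (n + i) := by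
  have h := cos_half_mul_one_add_sum_alternating_cos (betaA (n + 1) (i + 1)) n
  rw [betaA_succ_succ, mul_div_cancel_left₀ _ two_ne_zero,
    show (2 * n + 1) * (2 * (i * π / (2 * n + 1))) / 2 = i * π by field_simp,
    cos_nat_mul_pi, ← betaA_succ_succ, ← sum_wvec_succ, ← pow_add] at h
  linear_combination h

lemma prod_Icc_two_mul_eq_of_symm {M : Type*} [CommMonoid M] (n : ℕ) (f : ℕ → M)
    (hf : ∀ x ≤ 2 * n + 1, f (2 * n + 1 - x) = f x) :
    ∏ j ∈ Icc 1 n, f (2 * j) = ∏ j ∈ Icc 1 n, f j := by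
  -- `2j` is folded back into `[1, n]` by `x ↦ 2n + 1 - x`, which flips parity.
  refine prod_nbij' (fun a => if 2 * a ≤ n then 2 * a else 2 * n + 1 - 2 * a)
    (fun b => if b % 2 = 0 then b / 2 else n - (b - 1) / 2) ?_ ?_ ?_ ?_ ?_ <;>
    simp only [mem_Icc]
  any_goals intro a ha; split_ifs <;> omega
  intro a ha
  split_ifs
  · rfl
  · exact (hf (2 * a) (by omega)).symm

lemma neg_one_pow_choose_two {R : Type*} [Monoid R] [HasDistribNeg R] (r : ℕ) :
    (-1 : R) ^ r.choose 2 = (-1) ^ (r / 2) := by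
  induction r using Nat.twoStepInduction with
  | zero => simp
  | one => simp
  | more r ih _ =>
    rw [show (r + 2).choose 2 = r.choose 2 + 2 * r + 1 by simp [Nat.choose_succ_succ]; ring,
      show (r + 2) / 2 = r / 2 + 1 by omega, pow_add, pow_add, pow_mul, ih]
    simp [pow_succ]

lemma prod_range_neg_one_pow {R : Type*} [CommMonoid R] [HasDistribNeg R] (r : ℕ) :
    ∏ i ∈ range r, (-1 : R) ^ i = (-1) ^ (r / 2) := by
  rw [prod_pow_eq_pow_sum, sum_range_id, ← Nat.choose_two_right, neg_one_pow_choose_two]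

lemma prod_Icc_cos_pi_div (n : ℕ) :
    ∏ j ∈ Icc 1 n, cos (j * π / (2 * n + 1)) = (2 ^ n)⁻¹ := by
  set x : ℕ → ℝ := fun j => j * π / (2 * n + 1)
  have hsin_pos : 0 < ∏ j ∈ Icc 1 n, sin (x j) := by
    refine prod_pos fun j hj => ?_
    have hj₁ : (1 : ℝ) ≤ j := by exact_mod_cast (mem_Icc.1 hj).1
    have hjn : (j : ℝ) ≤ n := by exact_mod_cast (mem_Icc.1 hj).2
    refine sin_pos_of_pos_of_lt_pi (by positivity) ?_
    rw [div_lt_iff₀ (by positivity)]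
    nlinarith [pi_pos]
  have hsymm : ∀ j ≤ 2 * n + 1, sin (x (2 * n + 1 - j)) = sin (x j) := fun j hj => by
    rw [← sin_pi_sub]; congr 1; simp only [x]; push_cast [hj]; field_simp; ring
  have hdouble : ∏ j ∈ Icc 1 n, sin (x (2 * j))
      = 2 ^ n * (∏ j ∈ Icc 1 n, sin (x j)) * ∏ j ∈ Icc 1 n, cos (x j) := by
    simp only [x, Nat.cast_mul, Nat.cast_ofNat, mul_assoc, mul_div_assoc, sin_two_mul]
    rw [prod_mul_distrib, prod_mul_distrib, prod_const, Nat.card_Icc, Nat.add_sub_cancel]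
  rw [prod_Icc_two_mul_eq_of_symm n (fun j => sin (x j)) hsymm, mul_comm (2 ^ n), mul_assoc] at hdouble
  exact eq_inv_of_mul_eq_one_right <|
    (mul_eq_left₀ hsin_pos.ne').1 hdouble.symm

/-- `∏_{k=1}^{r} (e_rᵀ w_k) = (-1)^⌊r/2⌋ · 2^(r-1)`. -/
theorem prod_sum_wvec (r : ℕ) (hr : 2 ≤ r) :
    ∏ k ∈ Finset.Icc 1 r, (∑ j, wvec r k j) = (-1 : ℝ) ^ (r / 2) * 2 ^ (r - 1) := by
  obtain ⟨n, rfl⟩ : ∃ n, r = n + 1 := ⟨r - 1, by omega⟩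
  have hcos : ∏ i ∈ range (n + 1), cos (i * π / (2 * n + 1)) = (2 ^ n)⁻¹ := by
    rw [prod_range_succ', ← prod_Icc_one_eq_prod_range (fun j => cos (j * π / (2 * n + 1))),
      prod_Icc_cos_pi_div]
    simp
  have hsign : ∏ i ∈ range (n + 1), (-1 : ℝ) ^ (n + i) = (-1) ^ ((n + 1) / 2) := by
    rw [prod_congr rfl fun i _ => pow_add (-1 : ℝ) n i, prod_mul_distrib, prod_const, card_range,
      ← pow_mul, (Nat.even_mul_succ_self n).neg_one_pow, one_mul, prod_range_neg_one_pow]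
  have h := prod_congr rfl fun i (_ : i ∈ range (n + 1)) => sum_wvec_mul_cos n i
  rw [prod_mul_distrib, hcos, hsign] at h
  rw [prod_Icc_one_eq_prod_range, Nat.add_sub_cancel, ← h, inv_mul_cancel_right₀ (by positivity)]
end
end

section
/- Let r ≥ 2 be an integer. Then the walk matrix W(M_2) of the matrix M_2 has rank r over ℝ (equivalently, W(M_2) is nonsingular). -/
open Matrix BigOperators

/-- The divisor-type matrix `M₂`: tridiagonal with diagonal `(1, 2, ..., 2)`,
superdiagonal entries `1`, subdiagonal entries `1` except the last one which is `2`
(0-based indexing). -/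
def M2 (r : ℕ) : Matrix (Fin r) (Fin r) ℤ :=
  Matrix.of fun i j =>
    if i = j then (if (i : ℕ) = 0 then 1 else 2)
    else if (i : ℕ) + 1 = (j : ℕ) then 1
    else if (j : ℕ) + 1 = (i : ℕ) then (if (i : ℕ) = r - 1 then 2 else 1)
    else 0

/-!
Every row sum of `M₂` is `4` except the first, which is `2`, so `M₂ 𝟙 = 4 𝟙 - 2 e₀`.
Subtracting `4` times column `j` from column `j + 1` of the walk matrix therefore leaves the
columns `𝟙, -2 e₀, -2 M₂ e₀, …, -2 M₂^(r-2) e₀`. Since `M₂` is upper Hessenberg with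
subdiagonal `1, …, 1, 2`, the vector `M₂ᵏ e₀` vanishes below index `k` and has entry `1` at
index `k < r - 1`. Replacing each row by its difference with the previous one then gives an
upper triangular matrix with diagonal `1, 2, …, 2`, so `det W(M₂) = 2^(r-1)`.
-/

theorem Fin.sum_ite_val_eq {M : Type*} [AddCommMonoid M] (r m : ℕ) (x : M) :
    ∑ j : Fin r, (if (j : ℕ) = m then x else 0) = if m < r then x else 0 := by
  simp [Fin.sum_univ_eq_sum_range (fun j => if j = m then x else 0)]

def Matrix.IsUpperHessenberg {R : Type*} [Zero R] {r : ℕ} (M : Matrix (Fin r) (Fin r) R) :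
    Prop :=
  ∀ i j : Fin r, (j : ℕ) + 1 < i → M i j = 0

namespace Matrix.IsUpperHessenberg

variable {R : Type*} [Semiring R] {r : ℕ} {M : Matrix (Fin r) (Fin r) R}

theorem pow_apply_eq_zero (hM : M.IsUpperHessenberg) :
    ∀ (k : ℕ) (i j : Fin r), (j : ℕ) + k < i → (M ^ k) i j = 0
  | 0, i, j, h => one_apply_ne (Fin.ne_of_val_ne (by omega))
  | k + 1, i, j, h => by
    rw [pow_succ', mul_apply]
    refine Finset.sum_eq_zero fun l _ => ?_
    by_cases hl : (l : ℕ) + 1 < i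
    · rw [hM i l hl, zero_mul]
    · rw [pow_apply_eq_zero hM k l j (by omega), mul_zero]

theorem pow_succ_apply (hM : M.IsUpperHessenberg) {k : ℕ} {i j l : Fin r}
    (hij : (i : ℕ) = j + 1) (hjl : (j : ℕ) = l + k) :
    (M ^ (k + 1)) i l = M i j * (M ^ k) j l := by
  rw [pow_succ', mul_apply]
  refine Finset.sum_eq_single j (fun m _ hm => ?_) (by simp)
  rcases lt_or_gt_of_ne (Fin.val_ne_of_ne hm) with h | h
  · rw [hM i m (by omega), zero_mul]
  · rw [hM.pow_apply_eq_zero k m l (by omega), mul_zero]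

end Matrix.IsUpperHessenberg

def onesKrylovMatrix {R : Type*} [CommRing R] {n : ℕ} (M : Matrix (Fin (n + 1)) (Fin (n + 1)) R)
    (d : R) (x : Fin (n + 1) → R) : Matrix (Fin (n + 1)) (Fin (n + 1)) R :=
  of fun i j => Fin.cases 1 (fun k : Fin n => d * (M ^ (k : ℕ) *ᵥ x) i) j

theorem det_walkMatrix_eq {n : ℕ} {M : Matrix (Fin (n + 1)) (Fin (n + 1)) ℤ} {c d : ℤ}
    {x : Fin (n + 1) → ℤ} (hM : M *ᵥ 1 = c • 1 + d • x) :
    (walkMatrix M).det = (onesKrylovMatrix M d x).det := by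
  refine det_eq_of_forall_col_eq_smul_add_pred (fun _ => c)
    (fun i => by simp [walkMatrix, onesKrylovMatrix]) fun i j => ?_
  have hpow : M ^ ((j : ℕ) + 1) *ᵥ 1 = c • (M ^ (j : ℕ) *ᵥ 1) + d • (M ^ (j : ℕ) *ᵥ x) := by
    rw [pow_succ, ← mulVec_mulVec, hM, mulVec_add, mulVec_smul, mulVec_smul]
  change (M ^ ((j : ℕ) + 1) *ᵥ 1) i = d * (M ^ (j : ℕ) *ᵥ x) i + c * (M ^ (j : ℕ) *ᵥ 1) i
  rw [hpow, Pi.add_apply, Pi.smul_apply, Pi.smul_apply, smul_eq_mul, smul_eq_mul, add_comm]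

theorem M2_isUpperHessenberg (r : ℕ) : (M2 r).IsUpperHessenberg := fun i j h => by
  simp only [M2, of_apply, Fin.ext_iff]
  split_ifs <;> omega

theorem M2_apply_of_val_eq_succ {r : ℕ} {i j : Fin r} (hij : (i : ℕ) = j + 1)
    (hi : (i : ℕ) ≠ r - 1) : M2 r i j = 1 := by
  simp only [M2, of_apply, Fin.ext_iff]
  split_ifs <;> omega

theorem M2_mulVec_one (n : ℕ) :
    M2 (n + 2) *ᵥ 1 = (4 : ℤ) • 1 + (-2 : ℤ) • Pi.single 0 1 := by
  ext i
  have hentry (j : Fin (n + 2)) : M2 (n + 2) i j =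
      (if (j : ℕ) = i then (if (i : ℕ) = 0 then 1 else 2) else 0) +
      (if (j : ℕ) = i + 1 then 1 else 0) +
      (if (i : ℕ) = 0 then 0
        else if (j : ℕ) = i - 1 then (if (i : ℕ) = n + 1 then 2 else 1) else 0) := by
    simp only [M2, of_apply, Fin.ext_iff]
    split_ifs <;> omega
  simp only [mulVec, dotProduct, Pi.one_apply, mul_one, hentry, Finset.sum_add_distrib,
    Finset.sum_ite_irrel, Finset.sum_const_zero, Fin.sum_ite_val_eq, Pi.add_apply, Pi.smul_apply,
    smul_eq_mul, Pi.single_apply, Fin.ext_iff, Fin.val_zero]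
  have := i.isLt
  split_ifs <;> omega

theorem M2_pow_apply_self_zero {n : ℕ} (i : Fin (n + 2)) (hi : (i : ℕ) ≤ n) :
    (M2 (n + 2) ^ (i : ℕ)) i 0 = 1 := by
  induction i using Fin.induction with
  | zero => simp
  | succ i ih =>
    simp only [Fin.val_castSucc] at ih
    rw [Fin.val_succ] at hi ⊢
    rw [(M2_isUpperHessenberg _).pow_succ_apply (j := i.castSucc) (by simp) (by simp),
      M2_apply_of_val_eq_succ (by simp) (by simp; omega), ih (by omega), one_mul]

theorem det_onesKrylovMatrix_M2 (n : ℕ) :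
    (onesKrylovMatrix (M2 (n + 2)) (-2) (Pi.single 0 1)).det = 2 ^ (n + 1) := by
  set C := onesKrylovMatrix (M2 (n + 2)) (-2) (Pi.single 0 1)
  have hC (i : Fin (n + 2)) (k : Fin (n + 1)) : C i k.succ = -2 * (M2 (n + 2) ^ (k : ℕ)) i 0 := by
    simp [C, onesKrylovMatrix]
  set T : Matrix (Fin (n + 2)) (Fin (n + 2)) ℤ :=
    of fun i j => Fin.cases (C 0 j) (fun i' => C i'.succ j - C i'.castSucc j) i
  have hCT : C.det = T.det :=
    det_eq_of_forall_row_eq_smul_add_pred (fun _ => 1) (fun _ => rfl) fun i j => by simp [T]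
  have hvanish := (M2_isUpperHessenberg (n + 2)).pow_apply_eq_zero
  have hT : T.BlockTriangular id := by
    intro i j hji
    induction i using Fin.cases with
    | zero => exact absurd hji (Fin.not_lt_zero j)
    | succ i =>
      induction j using Fin.cases with
      | zero => simp [T, C, onesKrylovMatrix]
      | succ j =>
        have hji' : (j : ℕ) < i := Fin.succ_lt_succ_iff.mp hji
        simp only [T, of_apply, Fin.cases_succ, hC]
        rw [hvanish j i.succ 0 (by simp; omega), hvanish j i.castSucc 0 (by simpa using hji')]
        simp
  have hdiag (i : Fin (n + 1)) : T i.succ i.succ = 2 := by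
    have hone := M2_pow_apply_self_zero i.castSucc (by simpa using Nat.le_of_lt_succ i.isLt)
    simp only [Fin.val_castSucc] at hone
    simp [T, hC, hvanish i i.succ 0 (by simp), hone]
  rw [hCT, det_of_isUpperTriangular hT, Fin.prod_univ_succ]
  simp only [hdiag, Finset.prod_const, Finset.card_univ, Fintype.card_fin]
  simp [T, C, onesKrylovMatrix]

theorem det_walkMatrix_M2 (n : ℕ) : (walkMatrix (M2 (n + 2))).det = 2 ^ (n + 1) := by
  rw [det_walkMatrix_eq (M2_mulVec_one n), det_onesKrylovMatrix_M2]

/-- The walk matrix of `M₂` has full rank `r` over `ℝ`. -/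
theorem rank_walkMatrix_M2 (r : ℕ) (hr : 2 ≤ r) :
    ((walkMatrix (M2 r)).map (Int.cast : ℤ → ℝ)).rank = r := by
  obtain ⟨n, rfl⟩ : ∃ n, r = n + 2 := ⟨r - 2, by omega⟩
  have hdet : ((walkMatrix (M2 (n + 2))).map (Int.cast : ℤ → ℝ)).det ≠ 0 := by
    rw [← Int.cast_det, det_walkMatrix_M2]
    positivity
  rw [rank_of_isUnit _ ((isUnit_iff_isUnit_det _).2 hdet.isUnit), Fintype.card_fin]
end
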